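/- Let g be a finite-dimensional real semisimple Lie algebra equipped with a ℤ-grading g = ⊕_{λ=-Δ}^{Δ} g_λ satisfying dim g_λ = dim g_{−λ} for all λ and dim g_{λ+1} ≤ dim g_λ for all λ ≥ 0 (as holds for the grading induced by a restricted-root decomposition, where g₀ = a ⊕ m₀). Set m = dim g₀. Then the direct product Lie algebra g ⊕ ℝ^m carries a nondegenerate symmetric bilinear form B of split signature (p,p), where 2p = dim g + m, such that the Lie bracket of g ⊕ ℝ^m is in the null cone of the O(B)-action. -/

import Mathlib

/-- The isometry group `O(B)` of a bilinear form `B`. -/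
def IsometryGrp {V : Type*} [AddCommGroup V] [Module ℝ V]
    (B : LinearMap.BilinForm ℝ V) : Set (V ≃ₗ[ℝ] V) :=
  {A | ∀ x y, B (A x) (A y) = B x y}

/-- `μ` is in the null cone of the `O(B)`-action: `0` lies in the closure of the orbit
`O(B)·μ`, `(A·μ)(x,y) = A⁻¹(μ(Ax,Ay))`, in the topology of pointwise convergence. -/
def InNullCone {V : Type*} [AddCommGroup V] [Module ℝ V] [TopologicalSpace V]
    (B : LinearMap.BilinForm ℝ V) (μ : V → V → V) : Prop :=
  (0 : V → V → V) ∈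
    closure {f : V → V → V | ∃ A ∈ IsometryGrp B, f = fun x y => A.symm (μ (A x) (A y))}

/-- `B` has signature `(p,q)`: it is represented in some basis by the diagonal matrix with
`p` entries `+1` and `q` entries `-1`. -/
def HasSignature {V : Type*} [AddCommGroup V] [Module ℝ V]
    (B : LinearMap.BilinForm ℝ V) (p q : ℕ) : Prop :=
  ∃ b : Module.Basis (Fin p ⊕ Fin q) ℝ V, ∀ i j, B (b i) (b j) =
    if i = j then Sum.elim (fun _ => (1 : ℝ)) (fun _ => (-1 : ℝ)) i else 0

open Module

/-!
Scale the degree-`l` part of `g` by `t ^ (2l + 1)`; this conjugates the bracket into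
`t • ⁅·, ·⁆`. Split `ℝ^m` into blocks of dimension `dim g_a - dim g_{a+1}`, `a ≥ 0` (they
exhaust `ℝ^m` because the sum telescopes to `dim g_0`), and give the `a`-th block the weight
`-(2a + 1)`. As `dim g_{-a-1} = dim g_{a+1}`, every weight now occurs as often as its negative,
so the basis splits into pairs of opposite weights. The scaling preserves the hyperbolic form
pairing them, which has split signature, and letting `t → 0` puts the bracket in the null cone.
-/

namespace Module.Basis

variable {ι R M : Type*} [CommSemiring R] [AddCommMonoid M] [Module R M]

noncomputable def zpowScaling (b : Basis ι R M) (w : ι → ℤ) (u : Rˣ) : M ≃ₗ[R] M :=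
  b.equiv (b.unitsSMul fun i => u ^ w i) (Equiv.refl ι)

variable (b : Basis ι R M) (w : ι → ℤ) (u : Rˣ)

@[simp]
theorem zpowScaling_apply_basis (i : ι) : b.zpowScaling w u (b i) = u ^ w i • b i := by
  simp [zpowScaling, Basis.equiv_apply, Basis.unitsSMul_apply]

theorem zpowScaling_apply_of_mem_span {a : ℤ} {x : M}
    (hx : x ∈ Submodule.span R (b '' {i | w i = a})) : b.zpowScaling w u x = u ^ a • x := by
  induction hx using Submodule.span_induction with
  | mem y hy =>
    obtain ⟨i, hi, rfl⟩ := hy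
    rw [zpowScaling_apply_basis, hi]
  | zero => simp
  | add y z _ _ hy hz => rw [map_add, hy, hz, smul_add]
  | smul r y _ hy => rw [map_smul, hy, smul_comm]

theorem zpowScaling_reindex {ι' : Type*} (e : ι ≃ ι') (w : ι' → ℤ) :
    (b.reindex e).zpowScaling w u = b.zpowScaling (w ∘ e) u :=
  LinearEquiv.toLinearMap_injective <| b.ext fun i => by
    simpa using (b.reindex e).zpowScaling_apply_basis w u (e i)

theorem zpowScaling_prod {ι' M' : Type*} [AddCommMonoid M'] [Module R M'] (b' : Basis ι' R M')
    (w' : ι' → ℤ) :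
    (b.prod b').zpowScaling (Sum.elim w w') u =
      (b.zpowScaling w u).prodCongr (b'.zpowScaling w' u) :=
  LinearEquiv.toLinearMap_injective <| (b.prod b').ext fun i => by
    rw [LinearEquiv.coe_coe, zpowScaling_apply_basis]
    rcases i with i | i <;> simp [Basis.prod_apply, Prod.smul_mk]

end Module.Basis

theorem DirectSum.IsInternal.mem_span_collectedBasis_image {R M ι : Type*} [Semiring R]
    [AddCommMonoid M] [Module R M] [DecidableEq ι] {A : ι → Submodule R M}
    (h : DirectSum.IsInternal A) {α : ι → Type*} (v : ∀ i, Basis (α i) R (A i)) {x : M}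
    {i : ι} (hx : x ∈ A i) : x ∈ Submodule.span R (h.collectedBasis v '' {q | q.1 = i}) := by
  rw [Basis.mem_span_image]
  intro q hq
  by_contra hqi
  exact Finsupp.mem_support_iff.mp hq (h.collectedBasis_repr_of_mem_ne v (Ne.symm hqi) hx)

theorem symm_lie_eq_smul_of_grading {R L : Type*} [CommRing R] [LieRing L] [LieAlgebra R L]
    (gr : ℤ → Submodule R L) (hgr : ⨆ l, gr l = ⊤)
    (hbr : ∀ (l s : ℤ) (x y : L), x ∈ gr l → y ∈ gr s → ⁅x, y⁆ ∈ gr (l + s))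
    (D : L ≃ₗ[R] L) (u : Rˣ) (hD : ∀ l, ∀ x ∈ gr l, D x = u ^ (2 * l + 1) • x) (x y : L) :
    D.symm ⁅D x, D y⁆ = u • ⁅x, y⁆ := by
  have homogeneous (l s : ℤ) (x : L) (hx : x ∈ gr l) (y : L) (hy : y ∈ gr s) :
      D.symm ⁅D x, D y⁆ = u • ⁅x, y⁆ := by
    rw [LinearEquiv.symm_apply_eq, Units.smul_def, map_smul, ← Units.smul_def,
      hD _ _ (hbr l s x y hx hy), hD l x hx, hD s y hy]
    simp only [Units.smul_def, smul_lie, lie_smul, smul_smul, ← Units.val_mul, ← zpow_add,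
      ← zpow_one_add]
    ring_nf
  refine Submodule.iSup_induction gr (motive := fun x => D.symm ⁅D x, D y⁆ = u • ⁅x, y⁆)
    (hgr ▸ Submodule.mem_top) (fun l x hx => ?_) (by simp)
    fun x x' hx hx' => by simp only [map_add, add_lie, hx, hx', smul_add]
  exact Submodule.iSup_induction gr (motive := fun y => D.symm ⁅D x, D y⁆ = u • ⁅x, y⁆)
    (hgr ▸ Submodule.mem_top) (fun s y hy => homogeneous l s x hx y hy) (by simp)
    fun y y' hy hy' => by simp only [map_add, lie_add, hy, hy', smul_add]

theorem DirectSum.IsInternal.zpowScaling_collectedBasis_symm_lie {R L : Type*} [CommRing R]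
    [LieRing L] [LieAlgebra R L] {gr : ℤ → Submodule R L} (h : DirectSum.IsInternal gr)
    (hbr : ∀ (l s : ℤ) (x y : L), x ∈ gr l → y ∈ gr s → ⁅x, y⁆ ∈ gr (l + s))
    {α : ℤ → Type*} (v : ∀ l, Basis (α l) R (gr l)) (u : Rˣ) (x y : L) :
    ((h.collectedBasis v).zpowScaling (fun q => 2 * q.1 + 1) u).symm
        ⁅(h.collectedBasis v).zpowScaling (fun q => 2 * q.1 + 1) u x,
          (h.collectedBasis v).zpowScaling (fun q => 2 * q.1 + 1) u y⁆ = u • ⁅x, y⁆ :=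
  symm_lie_eq_smul_of_grading gr h.submodule_iSup_eq_top hbr _ u (fun l x hx => by
    refine Basis.zpowScaling_apply_of_mem_span _ _ _ <|
      Submodule.span_mono (Set.image_mono ?_) (h.mem_span_collectedBasis_image v hx)
    rintro q rfl
    rfl) x y

theorem symm_prodCongr_lie_fst {R L V : Type*} [CommRing R] [LieRing L] [LieAlgebra R L]
    [AddCommGroup V] [Module R V] (D : L ≃ₗ[R] L) (D' : V ≃ₗ[R] V) (u : Rˣ)
    (hD : ∀ x y, D.symm ⁅D x, D y⁆ = u • ⁅x, y⁆) :
    (fun x y => (D.prodCongr D').symm (⁅(D.prodCongr D' x).1, (D.prodCongr D' y).1⁆, 0)) =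
      u • fun x y : L × V => (⁅x.1, y.1⁆, (0 : V)) := by
  ext x y <;> simp [hD, Units.smul_def]

theorem inNullCone_of_forall_smul_mem_orbit {V : Type*} [AddCommGroup V] [Module ℝ V]
    [TopologicalSpace V] [ContinuousSMul ℝ V] (B : LinearMap.BilinForm ℝ V) (μ : V → V → V)
    (h : ∀ t : ℝ, t ≠ 0 → ∃ A ∈ IsometryGrp B, t • μ = fun x y => A.symm (μ (A x) (A y))) :
    InNullCone B μ := by
  have hlim : Filter.Tendsto (fun t : ℝ => t • μ) (nhdsWithin 0 {0}ᶜ) (nhds 0) := by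
    simpa using ((Filter.tendsto_id (x := nhds (0 : ℝ))).smul_const μ).mono_left
      nhdsWithin_le_nhds
  exact mem_closure_of_tendsto hlim (eventually_nhdsWithin_of_forall h)

section HyperbolicForm

variable {P W : Type*} [DecidableEq P] [AddCommGroup W] [Module ℝ W]

noncomputable def hyperbolicForm (b : Basis (P ⊕ P) ℝ W) : LinearMap.BilinForm ℝ W :=
  b.constr ℝ fun k => b.constr ℝ fun k' => if k' = k.swap then 1 else 0

@[simp]
theorem hyperbolicForm_apply_basis (b : Basis (P ⊕ P) ℝ W) (k k' : P ⊕ P) :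
    hyperbolicForm b (b k) (b k') = if k' = k.swap then 1 else 0 := by
  simp [hyperbolicForm]

theorem hasSignature_hyperbolicForm [Finite P] (b : Basis (P ⊕ P) ℝ W) :
    HasSignature (hyperbolicForm b) (Nat.card P) (Nat.card P) := by
  set r : ℝ := (√2)⁻¹
  have hr : r * r = 2⁻¹ := by simp [r, ← mul_inv]
  -- an involution maps `b` to `r • (b (inl i) ± b (inr i))`, which diagonalises the form
  let v : P ⊕ P → W :=
    Sum.elim (fun i => r • (b (.inl i) + b (.inr i))) (fun i => r • (b (.inl i) - b (.inr i)))
  have hv : Function.Involutive (b.constr ℝ v) := by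
    have : b.constr ℝ v ∘ₗ b.constr ℝ v = LinearMap.id := b.ext fun k => by
      rcases k with i | i <;> simp [v, smul_add, smul_sub, smul_smul, hr, ← two_smul ℝ]
    exact fun x => congr($this x)
  let e := Finite.equivFin P
  refine ⟨(b.map (LinearEquiv.ofInvolutive _ hv)).reindex (e.sumCongr e), ?_⟩
  rintro (i | i) (j | j) <;>
    simp [v, smul_add, smul_sub, hr, eq_comm (a := j)] <;> split_ifs <;> norm_num

theorem zpowScaling_mem_isometryGrp (b : Basis (P ⊕ P) ℝ W) (w : P ⊕ P → ℤ)
    (hw : ∀ k, w k.swap = -w k) (u : ℝˣ) :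
    b.zpowScaling w u ∈ IsometryGrp (hyperbolicForm b) := by
  have : (hyperbolicForm b).compl₁₂ (b.zpowScaling w u).toLinearMap (b.zpowScaling w u) =
      hyperbolicForm b := LinearMap.BilinForm.ext_basis b fun k k' => by
    by_cases hk : k' = k.swap
    · subst hk
      simpa [Units.smul_def, hw] using inv_mul_cancel₀ (zpow_ne_zero (w k) u.ne_zero)
    · simp [hk]
  exact fun x y => congr($this x y)

theorem inNullCone_hyperbolicForm [TopologicalSpace W] [ContinuousSMul ℝ W]
    (b : Basis (P ⊕ P) ℝ W) (w : P ⊕ P → ℤ) (hw : ∀ k, w k.swap = -w k) (μ : W → W → W)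
    (hμ : ∀ u : ℝˣ, (fun x y => (b.zpowScaling w u).symm
      (μ (b.zpowScaling w u x) (b.zpowScaling w u y))) = (u : ℝ) • μ) :
    InNullCone (hyperbolicForm b) μ :=
  inNullCone_of_forall_smul_mem_orbit _ μ fun t ht =>
    ⟨_, zpowScaling_mem_isometryGrp b w hw (Units.mk0 t ht), (hμ (Units.mk0 t ht)).symm⟩

end HyperbolicForm

theorem exists_sum_equiv_swap_of_natCard_fiber_neg {κ : Type*} [Finite κ] (w : κ → ℤ)
    (hw₀ : ∀ x, w x ≠ 0) (hw : ∀ k, Nat.card {x // w x = k} = Nat.card {x // w x = -k}) :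
    ∃ e : {x // 0 < w x} ⊕ {x // 0 < w x} ≃ κ, ∀ k, w (e k.swap) = -w (e k) := by
  have fiber (k : ℤ) :
      {x : {x // 0 < w x} // w x = k} ≃ {y : {y // w y < 0} // -w y = k} := by
    refine Classical.choice <| Finite.card_eq.mp ?_
    rw [Nat.card_congr (Equiv.subtypeSubtypeEquivSubtypeInter _ (fun x => w x = k)),
      Nat.card_congr (Equiv.subtypeSubtypeEquivSubtypeInter _ (fun y => -w y = k))]
    rcases lt_or_ge 0 k with hk | hk
    · rw [Nat.card_congr (Equiv.subtypeEquivRight fun x =>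
          (by omega : 0 < w x ∧ w x = k ↔ w x = k)),
        Nat.card_congr (Equiv.subtypeEquivRight fun x =>
          (by omega : w x < 0 ∧ -w x = k ↔ w x = -k)), hw]
    · rw [Nat.card_congr (Equiv.subtypeEquivRight fun x =>
        (by omega : 0 < w x ∧ w x = k ↔ w x < 0 ∧ -w x = k))]
  let neg : {x // 0 < w x} ≃ {x // w x < 0} := Equiv.ofFiberEquiv fiber
  have hneg (x) : w (neg x) = -w x := neg_eq_iff_eq_neg.mp (Equiv.ofFiberEquiv_map fiber x)
  let nonpos : {x // w x < 0} ≃ {x // ¬ 0 < w x} :=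
    Equiv.subtypeEquivRight fun x => by have := hw₀ x; omega
  refine ⟨(Equiv.sumCongr (Equiv.refl _) (neg.trans nonpos)).trans (Equiv.sumCompl _), ?_⟩
  rintro (x | x) <;> simp [nonpos, hneg]

theorem natCard_fiber_two_mul_add_one_neg {κ : Type*} (lvl : κ → ℤ)
    (h : ∀ l, Nat.card {x // lvl x = l} = Nat.card {x // lvl x = -l - 1}) (k : ℤ) :
    Nat.card {x // 2 * lvl x + 1 = k} = Nat.card {x // 2 * lvl x + 1 = -k} := by
  obtain ⟨l, rfl | rfl⟩ := Int.even_or_odd' k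
  · exact Nat.card_congr (Equiv.subtypeEquivRight fun x => by omega)
  · rw [Nat.card_congr (Equiv.subtypeEquivRight fun x =>
        (by omega : 2 * lvl x + 1 = 2 * l + 1 ↔ lvl x = l)),
      Nat.card_congr (Equiv.subtypeEquivRight fun x =>
        (by omega : 2 * lvl x + 1 = -(2 * l + 1) ↔ lvl x = -l - 1))]
    exact h l

theorem sum_range_tsub_of_antitone {d : ℕ → ℕ} (hd : Antitone d) (N : ℕ) :
    ∑ a ∈ Finset.range N, (d a - d (a + 1)) = d 0 - d N := by
  induction N with
  | zero => simp
  | succ N ih =>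
    have h1 := hd (Nat.le_add_right N 1)
    have h2 := hd (Nat.zero_le N)
    rw [Finset.sum_range_succ, ih]
    omega

theorem nonempty_equiv_sigma_tsub {d : ℕ → ℕ} (hd : Antitone d) {N : ℕ} (hN : d N = 0) :
    Nonempty (Fin (d 0) ≃ Σ a : Fin N, Fin (d a - d (a + 1))) := by
  rw [← Finite.card_eq, Nat.card_sigma]
  simp [Fin.sum_univ_eq_sum_range (fun a => d a - d (a + 1)),
    sum_range_tsub_of_antitone hd, hN]

theorem natCard_sigma_fin_fiber (f : ℕ → ℕ) {N a : ℕ} (hf : N ≤ a → f a = 0) :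
    Nat.card {s : Σ i : Fin N, Fin (f i) // (s.1 : ℕ) = a} = f a := by
  by_cases ha : a < N
  · have hfst (s : Σ i : Fin N, Fin (f i)) : (s.1 : ℕ) = a ↔ s.1 = ⟨a, ha⟩ := by
      rw [Fin.ext_iff]
    simp_rw [hfst]
    rw [Nat.card_congr (Equiv.sigmaSubtype _), Nat.card_eq_fintype_card, Fintype.card_fin]
  · rw [hf (not_lt.mp ha), Nat.card_eq_zero]
    exact Or.inl ⟨fun s => ha (s.2 ▸ s.1.1.2)⟩

/-- Levels of a basis of `g × ℝ^m`: a graded basis of `g` sits at its degrees, the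
`n a - n (a + 1)` vectors of the `a`-th block of `ℝ^m` at level `-a - 1`. -/
def extendedLevel (n : ℤ → ℕ) (N : ℕ) :
    (Σ l, Fin (n l)) ⊕ (Σ a : Fin N, Fin (n (a : ℕ) - n ((a : ℕ) + 1 : ℕ))) → ℤ :=
  Sum.elim Sigma.fst fun s => -(s.1 : ℤ) - 1

theorem natCard_extendedLevel_fiber (n : ℤ → ℕ) (hsymm : ∀ l, n (-l) = n l)
    (hanti : Antitone fun a : ℕ => n a) {N : ℕ} (hN : n N = 0) [Finite (Σ l, Fin (n l))]
    (l : ℤ) :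
    Nat.card {x // extendedLevel n N x = l} = Nat.card {x // extendedLevel n N x = -l - 1} := by
  have fiber (l : ℤ) : Nat.card {x // extendedLevel n N x = l} = n l + Nat.card
      {s : Σ a : Fin N, Fin (n (a : ℕ) - n ((a : ℕ) + 1 : ℕ)) // -(s.1 : ℤ) - 1 = l} := by
    rw [Nat.card_congr Equiv.subtypeSum, Nat.card_sum]
    simp only [extendedLevel, Sum.elim_inl, Sum.elim_inr]
    simp [Nat.card_congr (Equiv.sigmaSubtype l)]
  have nonneg (a : ℕ) : Nat.card {x // extendedLevel n N x = a} = n a := by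
    rw [fiber, add_eq_left, Nat.card_eq_zero]
    exact Or.inl ⟨fun s => by omega⟩
  have neg (a : ℕ) : Nat.card {x // extendedLevel n N x = -a - 1} = n a := by
    have hsucc : n (-a - 1) = n (a + 1 : ℕ) := by rw [← hsymm]; push_cast; ring_nf
    have hle : n (a + 1 : ℕ) ≤ n a := hanti (Nat.le_add_right a 1)
    have hlev (s : Σ a : Fin N, Fin (n (a : ℕ) - n ((a : ℕ) + 1 : ℕ))) :
        -(s.1 : ℤ) - 1 = -a - 1 ↔ (s.1 : ℕ) = a := by omega
    rw [fiber, hsucc]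
    simp_rw [hlev]
    rw [natCard_sigma_fin_fiber (fun a : ℕ => n a - n (a + 1 : ℕ))]
    · omega
    · intro ha
      have : n a ≤ n N := hanti ha
      omega
  obtain ⟨a, rfl | rfl⟩ : ∃ a : ℕ, l = a ∨ l = -a - 1 :=
    ⟨if 0 ≤ l then l.toNat else (-l - 1).toNat, by split_ifs <;> omega⟩
  · rw [nonneg, neg]
  · rw [show -(-(a : ℤ) - 1) - 1 = a by ring, neg, nonneg]

theorem semisimple_graded_split_signature_in_null_cone
    (g : Type) [LieRing g] [LieAlgebra ℝ g] [FiniteDimensional ℝ g]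
    [TopologicalSpace g] [ContinuousSMul ℝ g]
    (Δ : ℕ) (gr : ℤ → Submodule ℝ g)
    (hbound : ∀ l : ℤ, gr l ≠ ⊥ → l.natAbs ≤ Δ)
    (hinternal : DirectSum.IsInternal gr)
    (hbr : ∀ (l s : ℤ) (x y : g), x ∈ gr l → y ∈ gr s → ⁅x, y⁆ ∈ gr (l + s))
    (hsymmdim : ∀ l : ℤ, Module.finrank ℝ (gr l) = Module.finrank ℝ (gr (-l)))
    (hdecr : ∀ l : ℤ, 0 ≤ l → Module.finrank ℝ (gr (l + 1)) ≤ Module.finrank ℝ (gr l))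
    (m : ℕ) (hm : m = Module.finrank ℝ (gr 0)) :
    ∃ (B : LinearMap.BilinForm ℝ (g × (Fin m → ℝ))) (p : ℕ),
      2 * p = Module.finrank ℝ g + m ∧ HasSignature B p p ∧
      InNullCone B (fun a b => (⁅a.1, b.1⁆, 0)) := by
  classical
  set n : ℤ → ℕ := fun l => finrank ℝ (gr l)
  have hanti : Antitone fun a : ℕ => n a :=
    antitone_nat_of_succ_le fun a => by simpa [n] using hdecr a a.cast_nonneg
  have hvanish : n (Δ + 1 : ℕ) = 0 := by
    simpa [n] using not_imp_comm.mp (hbound (Δ + 1 : ℕ)) (by omega)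
  subst hm
  obtain ⟨eM⟩ := nonempty_equiv_sigma_tsub hanti hvanish
  let cg := hinternal.collectedBasis fun l => finBasis ℝ (gr l)
  have := Module.Finite.finite_basis cg
  let c := cg.prod ((Pi.basisFun ℝ (Fin (n 0))).reindex eM)
  let w x := 2 * extendedLevel n (Δ + 1) x + 1
  obtain ⟨e, he⟩ := exists_sum_equiv_swap_of_natCard_fiber_neg w
    (fun x => by dsimp only [w]; omega) (natCard_fiber_two_mul_add_one_neg _
      (natCard_extendedLevel_fiber n (fun l => (hsymmdim l).symm) hanti hvanish))
  let b := c.reindex e.symm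
  have hdim := finrank_eq_nat_card_basis b
  rw [finrank_prod, finrank_fin_fun, Nat.card_sum] at hdim
  refine ⟨hyperbolicForm b, _, by change 2 * _ = finrank ℝ g + n 0; omega,
    hasSignature_hyperbolicForm b, inNullCone_hyperbolicForm b (w ∘ e) he _ fun u => ?_⟩
  rw [Basis.zpowScaling_reindex, Function.comp_assoc, e.self_comp_symm, Function.comp_id,
    ← Sum.elim_comp_inl_inr w, Basis.zpowScaling_prod]
  exact symm_prodCongr_lie_fst _ _ u (hinternal.zpowScaling_collectedBasis_symm_lie hbr _ u)
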